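/- Under the map Ω ↦ Ω' = cos(θ) Ω + i⟨σ_E⟩ sin(θ) σ_S Ω with σ_S a Hermitian involution and ⟨σ_E⟩ ∈ [−1,1], the Frobenius norm satisfies ‖Ω'‖_F² = ‖Ω‖_F² (1 − δ sin²θ), where δ = 1 − ⟨σ_E⟩². -/

import Mathlib

open scoped Kronecker
open Matrix
open scoped ComplexOrder Classical

noncomputable def ptraceRight {m n : Type*} [Fintype n]
    (M : Matrix (m × n) (m × n) ℂ) : Matrix m m ℂ :=
  fun i j => ∑ k, M (i, k) (j, k)

noncomputable def ptraceLeft {m n : Type*} [Fintype m]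
    (M : Matrix (m × n) (m × n) ℂ) : Matrix n n ℂ :=
  fun i j => ∑ k, M (k, i) (k, j)

/-- von Neumann entropy in base 2: `-Tr (ρ log₂ ρ)` computed via eigenvalues. -/
noncomputable def vNE {n : Type*} [Fintype n] [DecidableEq n]
    (ρ : Matrix n n ℂ) : ℝ :=
  if h : ρ.IsHermitian then (∑ i, Real.negMulLog (h.eigenvalues i)) / Real.log 2
  else 0

def IsDensity {n : Type*} [Fintype n] (ρ : Matrix n n ℂ) : Prop :=
  ρ.PosSemidef ∧ ρ.trace = 1

/-- The positive semidefinite square root (the definition of `Matrix.PosSemidef.sqrt` in the older Mathlib). -/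
noncomputable def Matrix.PosSemidef.sqrt {𝕜 : Type*} [RCLike 𝕜] {n : Type*} [Fintype n] [DecidableEq n]
    {A : Matrix n n 𝕜} (hA : A.PosSemidef) : Matrix n n 𝕜 :=
  hA.1.eigenvectorUnitary.1 * diagonal ((↑) ∘ (√·) ∘ hA.1.eigenvalues) *
  (star hA.1.eigenvectorUnitary : Matrix n n 𝕜)

/-- Uhlmann fidelity `Tr √(√ρ σ √ρ)` (recall `√ρ` is Hermitian). -/
noncomputable def fidelity {n : Type*} [Fintype n] [DecidableEq n]
    (ρ σ : Matrix n n ℂ) : ℝ :=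
  if h : ρ.PosSemidef ∧ σ.PosSemidef then
    (((h.2.conjTranspose_mul_mul_same h.1.sqrt).sqrt).trace).re
  else 0

def σx : Matrix (Fin 2) (Fin 2) ℂ := !![0, 1; 1, 0]
def σy : Matrix (Fin 2) (Fin 2) ℂ := !![0, -Complex.I; Complex.I, 0]
def σz : Matrix (Fin 2) (Fin 2) ℂ := !![1, 0; 0, -1]

/-- `r · σ` for a real 3-vector `r`. -/
noncomputable def bloch (r : Fin 3 → ℝ) : Matrix (Fin 2) (Fin 2) ℂ :=
  r 0 • σx + r 1 • σy + r 2 • σz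

/-- Tensor product of a finite family of matrices. -/
noncomputable def tensorFamily {ι : Type*} [Fintype ι] {m : Type*}
    (M : ι → Matrix m m ℂ) : Matrix (ι → m) (ι → m) ℂ :=
  fun f g => ∏ k, M k (f k) (g k)

/-!
Write `Ω' = U * Ω` with `U = cos θ • 1 + (i t sin θ) • σ_S`. Since `σ_S` is Hermitian with
`σ_S² = 1`, the cross terms of `Uᴴ * U` cancel and `Uᴴ * U = (cos² θ + t² sin² θ) • 1`.
The squared Frobenius norm is `re (tr (Ω'ᴴ * Ω'))`, so it is scaled by the same factor.
-/

namespace Matrix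

variable {m n : Type*} [Fintype m] [Fintype n]

theorem sum_sum_norm_sq_eq_re_trace_conjTranspose_mul_self (M : Matrix m n ℂ) :
    ∑ i, ∑ j, ‖M i j‖ ^ 2 = (Mᴴ * M).trace.re := by
  simp only [trace, diag_apply, mul_apply, conjTranspose_apply, Complex.re_sum]
  rw [Finset.sum_comm]
  refine Finset.sum_congr rfl fun i _ => Finset.sum_congr rfl fun j _ => ?_
  rw [Complex.sq_norm, Complex.normSq_apply]
  simp [Complex.mul_re]

theorem IsHermitian.conjTranspose_mul_self_smul_one_add_I_smul [DecidableEq n]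
    {S : Matrix n n ℂ} (hS : S.IsHermitian) (hS2 : S * S = 1) (a b : ℝ) :
    ((a : ℂ) • 1 + (Complex.I * b) • S)ᴴ * ((a : ℂ) • 1 + (Complex.I * b) • S)
      = ((a ^ 2 + b ^ 2 : ℝ) : ℂ) • 1 := by
  have hconj : star (Complex.I * b) = -(Complex.I * b) := by simp
  rw [conjTranspose_add, conjTranspose_smul, conjTranspose_smul, conjTranspose_one, hS.eq,
    hconj]
  simp only [Matrix.add_mul, Matrix.mul_add, smul_mul, Matrix.mul_smul, Matrix.one_mul,
    Matrix.mul_one, hS2]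
  have hnorm : ((a ^ 2 + b ^ 2 : ℝ) : ℂ) = a * a - (Complex.I * b) * (Complex.I * b) := by
    push_cast
    linear_combination (b : ℂ) ^ 2 * Complex.I_sq
  rw [Complex.star_def, Complex.conj_ofReal, hnorm]
  module

theorem sum_sum_norm_sq_smul_add_smul_mul [DecidableEq m] {S : Matrix m m ℂ}
    (hS : S.IsHermitian) (hS2 : S * S = 1) (a b : ℝ) (Ω : Matrix m n ℂ) :
    ∑ i, ∑ j, ‖((a : ℂ) • Ω + (Complex.I * b) • (S * Ω)) i j‖ ^ 2
      = (a ^ 2 + b ^ 2) * ∑ i, ∑ j, ‖Ω i j‖ ^ 2 := by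
  have hU : (a : ℂ) • Ω + (Complex.I * b) • (S * Ω)
      = ((a : ℂ) • 1 + (Complex.I * b) • S) * Ω := by
    rw [Matrix.add_mul, smul_mul, smul_mul, Matrix.one_mul]
  rw [hU, sum_sum_norm_sq_eq_re_trace_conjTranspose_mul_self,
    sum_sum_norm_sq_eq_re_trace_conjTranspose_mul_self, conjTranspose_mul, Matrix.mul_assoc,
    ← Matrix.mul_assoc _ _ Ω, hS.conjTranspose_mul_self_smul_one_add_I_smul hS2, smul_mul,
    Matrix.one_mul, Matrix.mul_smul, trace_smul, smul_eq_mul, Complex.re_ofReal_mul]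

end Matrix

theorem stmt5_general (σS : Matrix (Fin 2) (Fin 2) ℂ)
    (hS : σS.IsHermitian) (hS2 : σS * σS = 1)
    (t : ℝ) (θ : ℝ)
    (Ω : Matrix (Fin 2) (Fin 2) ℂ) :
    let Ω' := (Real.cos θ : ℂ) • Ω + (Complex.I * (t : ℂ) * (Real.sin θ : ℂ)) • (σS * Ω)
    ∑ i, ∑ j, ‖Ω' i j‖ ^ 2
      = (∑ i, ∑ j, ‖Ω i j‖ ^ 2) * (1 - (1 - t ^ 2) * Real.sin θ ^ 2) := by
  have h := Matrix.sum_sum_norm_sq_smul_add_smul_mul hS hS2 (Real.cos θ) (t * Real.sin θ) Ω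
  rw [Complex.ofReal_mul, ← mul_assoc] at h
  dsimp only
  rw [h, Real.cos_sq']
  ring

/-- Under `Ω ↦ Ω' = cos(θ)Ω + i⟨σ_E⟩sin(θ) σ_S Ω` with `σ_S` a
traceless Hermitian involution and `⟨σ_E⟩ ∈ [−1,1]`,
`‖Ω'‖_F² = ‖Ω‖_F² (1 − δ sin²θ)` with `δ = 1 − ⟨σ_E⟩²`. -/
theorem stmt5 (σS : Matrix (Fin 2) (Fin 2) ℂ)
    (hS : σS.IsHermitian) (hS2 : σS * σS = 1) (hStr : σS.trace = 0)
    (t : ℝ) (ht : t ∈ Set.Icc (-1 : ℝ) 1) (θ : ℝ)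
    (Ω : Matrix (Fin 2) (Fin 2) ℂ) :
    let Ω' := (Real.cos θ : ℂ) • Ω + (Complex.I * (t : ℂ) * (Real.sin θ : ℂ)) • (σS * Ω)
    ∑ i, ∑ j, ‖Ω' i j‖ ^ 2
      = (∑ i, ∑ j, ‖Ω i j‖ ^ 2) * (1 - (1 - t ^ 2) * Real.sin θ ^ 2) :=
  stmt5_general σS hS hS2 t θ Ω
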